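/- arXiv:1803.02475 — 8 statements merged into one kernel-verified Lean document; each statement's English description precedes it below -/
import Mathlib

section
/- If α is infinite and f : α × α → α is injective, then for sets F, G of α that are not equal, the symmetric difference of U[F] := f '' (F ×ˢ univ) and U[G] := f '' (G ×ˢ univ) is infinite. -/
open Function Set

theorem Function.Injective.image_prod_univ_sdiff {α β γ : Type*} {f : α × β → γ}
    (hf : Injective f) (s t : Set α) :
    f '' (s ×ˢ univ) \ f '' (t ×ˢ univ) = f '' ((s \ t) ×ˢ univ) := by
  rw [← image_sdiff hf, prod_sdiff_prod, sdiff_self, prod_empty, empty_union]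

theorem stmt_1 {α : Type*} [Infinite α] (f : α × α → α) (hf : Function.Injective f)
    (F G : Set α) (hFG : F ≠ G) :
    ((f '' (F ×ˢ Set.univ) \ f '' (G ×ˢ Set.univ)) ∪
      (f '' (G ×ˢ Set.univ) \ f '' (F ×ˢ Set.univ))).Infinite := by
  rw [hf.image_prod_univ_sdiff, hf.image_prod_univ_sdiff, ← image_union, ← union_prod]
  exact (infinite_univ.prod_right (symmDiff_nonempty.2 hFG)).image hf.injOn
end

section
/- Let α be infinite with an injection f : α × α → α. Define the relation N on sets of α by N F G ↔ (F \ G is finite ∧ G \ F is finite). Then the map F ↦ U[F] := f '' (F ×ˢ univ) satisfies: N (U[F]) (U[G]) ↔ F = G. -/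
open Set

lemma Set.prod_univ_sdiff_prod_univ {α β : Type*} (s t : Set α) :
    s ×ˢ (univ : Set β) \ t ×ˢ univ = (s \ t) ×ˢ univ := by
  rw [prod_sdiff_prod, sdiff_self, prod_empty, empty_union]

lemma Set.finite_prod_univ_iff {α β : Type*} [Infinite β] {s : Set α} :
    (s ×ˢ (univ : Set β)).Finite ↔ s = ∅ := by
  simp +contextual [finite_prod, infinite_univ.not_finite]

lemma Function.Injective.finite_image_prod_univ_sdiff_iff {α β γ : Type*} [Infinite β]
    {f : α × β → γ} (hf : Function.Injective f) (s t : Set α) :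
    (f '' (s ×ˢ univ) \ f '' (t ×ˢ univ)).Finite ↔ s ⊆ t := by
  rw [← image_sdiff hf, prod_univ_sdiff_prod_univ, finite_image_iff hf.injOn,
    finite_prod_univ_iff, sdiff_eq_empty]

theorem stmt_2 {α : Type*} [Infinite α] (f : α × α → α) (hf : Function.Injective f)
    (F G : Set α) :
    ((Set.Finite (f '' (F ×ˢ Set.univ) \ f '' (G ×ˢ Set.univ)) ∧
      Set.Finite (f '' (G ×ˢ Set.univ) \ f '' (F ×ˢ Set.univ))) ↔ F = G) := by
  rw [hf.finite_image_prod_univ_sdiff_iff, hf.finite_image_prod_univ_sdiff_iff,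
    subset_antisymm_iff]
end

section
/- Suppose α is a type with an injection f : α × α → α, and ν : Set α → α satisfies the Nuisance Principle: ν F = ν G ↔ (F \ G finite ∧ G \ F finite). Then α is finite. -/
/-!
If `α` were infinite, each `F : Set α` could be spread over the columns `f '' (F ×ˢ univ)`: two
distinct sets differ in a whole column, i.e. in infinitely many points, so `ν` would separate
their spreads. This gives an injection `Set α → α`, contradicting Cantor's theorem.
-/

open Set Function

theorem Set.subset_of_finite_image_prod_univ_sdiff {α β γ : Type*} [Infinite β]
    {f : α × β → γ} (hf : Injective f) {F G : Set α}
    (h : (f '' (F ×ˢ univ) \ f '' (G ×ˢ univ)).Finite) : F ⊆ G := by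
  rw [← image_sdiff hf, prod_sdiff_prod, sdiff_self, prod_empty, empty_union] at h
  have hprod : ((F \ G) ×ˢ (univ : Set β)).Finite := h.of_finite_image hf.injOn
  exact sdiff_eq_empty.mp <| (finite_prod.mp hprod).2.resolve_left infinite_univ

theorem injective_comp_of_finite_sdiff_iff {α β γ : Type*} {ν : Set β → γ}
    (hν : ∀ F G : Set β, ν F = ν G ↔ ((F \ G).Finite ∧ (G \ F).Finite))
    {e : Set α → Set β} (he : ∀ F G, (e F \ e G).Finite → F ⊆ G) :
    Injective (ν ∘ e) := fun F G hFG =>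
  have ⟨hFG, hGF⟩ := (hν _ _).mp hFG
  (he F G hFG).antisymm (he G F hGF)

theorem stmt_4 {α : Type*} (f : α × α → α) (hf : Function.Injective f)
    (ν : Set α → α)
    (hν : ∀ F G : Set α, ν F = ν G ↔ (Set.Finite (F \ G) ∧ Set.Finite (G \ F))) :
    Finite α := by
  by_contra hfin
  have : Infinite α := not_finite_iff_infinite.mp hfin
  have hspread : ∀ F G : Set α, (f '' (F ×ˢ univ) \ f '' (G ×ˢ univ)).Finite → F ⊆ G :=
    fun _ _ => subset_of_finite_image_prod_univ_sdiff hf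
  exact cantor_injective _ (injective_comp_of_finite_sdiff_iff hν hspread)
end

section
/- If α is infinite, there is no ν : Set α → α with ν F = ν G ↔ (F \ G finite ∧ G \ F finite). (NP is unsatisfiable on infinite domains, using the fact that infinite types admit a pairing bijection.) -/
/-!
Fix a bijection `e : α × α ≃ α` and send `A : Set α` to `e '' (A ×ˢ univ)`. Each point of
`A \ B` contributes a whole infinite fibre to the difference of the images, so the images of
distinct sets are never almost equal. Composing with `ν` would then inject `Set α` into `α`,
contradicting Cantor's theorem.
-/

open Set Function

theorem Set.prod_univ_finite_iff {β γ : Type*} [Infinite γ] {s : Set β} :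
    (s ×ˢ (univ : Set γ)).Finite ↔ s = ∅ := by
  refine ⟨fun h => ?_, fun h => by simp [h]⟩
  simpa [infinite_univ.not_finite] using (finite_prod.mp h).2

theorem Function.Injective.image_prod_univ_sdiff_finite_iff {β γ δ : Type*} [Infinite γ]
    {f : β × γ → δ} (hf : Injective f) {A B : Set β} :
    (f '' (A ×ˢ univ) \ f '' (B ×ˢ univ)).Finite ↔ A ⊆ B := by
  rw [← image_sdiff hf, finite_image_iff hf.injOn, prod_sdiff_prod, sdiff_self, prod_empty,
    empty_union, prod_univ_finite_iff, sdiff_eq_empty]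

theorem Infinite.nonempty_prod_self_equiv (α : Type*) [Infinite α] : Nonempty (α × α ≃ α) := by
  rw [← Cardinal.eq, Cardinal.mk_prod, Cardinal.lift_id]
  exact Cardinal.mul_eq_self (Cardinal.aleph0_le_mk α)

theorem stmt_5 {α : Type*} [Infinite α] :
    ¬ ∃ ν : Set α → α,
      ∀ F G : Set α, ν F = ν G ↔ (Set.Finite (F \ G) ∧ Set.Finite (G \ F)) := by
  rintro ⟨ν, hν⟩
  obtain ⟨e⟩ := Infinite.nonempty_prod_self_equiv α
  refine cantor_injective (fun A => ν (e '' (A ×ˢ univ))) fun A B hAB => ?_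
  obtain ⟨hAB, hBA⟩ := (hν _ _).mp hAB
  exact (e.injective.image_prod_univ_sdiff_finite_iff.mp hAB).antisymm
    (e.injective.image_prod_univ_sdiff_finite_iff.mp hBA)
end

section
/- If there exists ν : Set α → α satisfying Hume's Principle (ν F = ν G ↔ ∃ bijection between F and G as sets), then α is infinite. -/
/-! A finite type with `n` elements has subsets of each of the `n + 1` sizes `0, …, n`, and `ν`
must send subsets of different sizes to different elements: `n + 1` distinct values in a type
with `n` elements. -/

theorem Set.exists_ncard_eq_of_le_card {α : Type*} {k : ℕ} (hk : k ≤ Nat.card α) :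
    ∃ s : Set α, s.ncard = k := by
  obtain ⟨s, -, hs⟩ := Set.exists_subset_card_eq (s := Set.univ) (n := k)
    (by rwa [Set.ncard_univ])
  exact ⟨s, hs⟩

theorem infinite_of_forall_eq_imp_equiv {α : Type*} (ν : Set α → α)
    (hν : ∀ F G : Set α, ν F = ν G → Nonempty (F ≃ G)) : Infinite α := by
  by_contra hfin
  have : Finite α := not_infinite_iff_finite.mp hfin
  choose s hs using fun k : Fin (Nat.card α + 1) =>
    Set.exists_ncard_eq_of_le_card (α := α) (Nat.lt_succ_iff.mp k.2)
  have hinj : Function.Injective (fun k => ν (s k)) := fun i j hij => by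
    obtain ⟨e⟩ := hν _ _ hij
    have hcard : (s i).ncard = (s j).ncard := Nat.card_congr e
    exact Fin.ext (by rwa [hs, hs] at hcard)
  simpa using Nat.card_le_card_of_injective _ hinj

theorem stmt_8 {α : Type*} (ν : Set α → α)
    (hν : ∀ F G : Set α, ν F = ν G ↔ Nonempty (F ≃ G)) :
    Infinite α :=
  infinite_of_forall_eq_imp_equiv ν fun F G => (hν F G).mp
end

section
/- Hume's Principle and the Nuisance Principle are jointly unsatisfiable: there is no type α with functions h, ν : Set α → α such that h F = h G ↔ Nonempty (F ≃ G) and ν F = ν G ↔ (F \ G finite ∧ G \ F finite). -/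
/-!
Hume's Principle forces `α` to be infinite: for finite `α` it would give `Nat.card α + 1`
pairwise distinct values `h S`, one for each possible size of `S`. For infinite `α`, fix
`α ≃ α × ℕ` and blow each `S` up to the copy of `S × ℕ`; distinct sets blow up to sets whose
difference is infinite, so the Nuisance Principle would make `S ↦ ν (S × ℕ)` an injection
`Set α → α`, contradicting Cantor's theorem.
-/

open Set Function

theorem infinite_of_hume {α : Type*} {h : Set α → α}
    (HP : ∀ F G : Set α, h F = h G ↔ Nonempty (F ≃ G)) : Infinite α := by
  by_contra hfin
  have : Finite α := not_infinite_iff_finite.mp hfin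
  have hsize : ∀ i : Fin (Nat.card α + 1), ∃ S : Set α, S.ncard = i := fun i => by
    obtain ⟨S, -, hS⟩ := exists_subset_card_eq (s := (univ : Set α)) (n := i) (by rw [ncard_univ]; omega)
    exact ⟨S, hS⟩
  choose S hS using hsize
  have hinj : Injective fun i => h (S i) := fun i j hij => by
    obtain ⟨e⟩ := (HP _ _).mp hij
    exact Fin.ext (by rw [← hS i, ← hS j]; exact Nat.card_congr e)
  simpa using Nat.card_le_card_of_injective _ hinj

theorem Set.subset_of_finite_prod_univ_sdiff {α β : Type*} [Infinite β] {S T : Set α}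
    (hfin : (S ×ˢ (univ : Set β) \ T ×ˢ univ).Finite) : S ⊆ T := by
  rw [prod_sdiff_prod, sdiff_self, prod_empty, empty_union, finite_prod] at hfin
  exact sdiff_eq_empty.mp (hfin.2.resolve_left infinite_univ)

theorem not_nuisance {α : Type*} [Infinite α] (ν : Set α → α) :
    ¬ ∀ F G : Set α, ν F = ν G ↔ ((F \ G).Finite ∧ (G \ F).Finite) := by
  intro NP
  obtain ⟨e⟩ : Nonempty (α ≃ α × ℕ) := Cardinal.eq.mp <| by
    simp [Cardinal.mul_aleph0_eq (Cardinal.aleph0_le_mk α)]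
  let blowup (S : Set α) : Set α := e ⁻¹' (S ×ˢ univ)
  have hsubset : ∀ S T, (blowup S \ blowup T).Finite → S ⊆ T := fun S T hfin =>
    subset_of_finite_prod_univ_sdiff (Finite.of_preimage hfin e.surjective)
  refine cantor_injective (ν ∘ blowup) fun S T hST => ?_
  obtain ⟨hST, hTS⟩ := (NP _ _).mp hST
  exact (hsubset S T hST).antisymm (hsubset T S hTS)

theorem stmt_9 {α : Type*} (h ν : Set α → α) :
    ¬ ((∀ F G : Set α, h F = h G ↔ Nonempty (F ≃ G)) ∧
       (∀ F G : Set α, ν F = ν G ↔ (Set.Finite (F \ G) ∧ Set.Finite (G \ F)))) := by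
  rintro ⟨HP, NP⟩
  have := infinite_of_hume HP
  exact not_nuisance ν NP
end

section
/- If α is uncountable and F ≠ G are sets of α, and f : α × α → α is injective, then U[F] and U[G] have symmetric difference of cardinality at least #α; in particular they are not N-equivalent even for a 'countable' variant of N (where N F G means F \ G and G \ F are countable). -/
open Set Function

section

variable {α β γ : Type*} {f : α × β → γ}

lemma image_mk_univ_subset_image_prod_univ_diff (hf : Injective f) {F G : Set α} {a : α}
    (haF : a ∈ F) (haG : a ∉ G) :
    (fun b ↦ f (a, b)) '' univ ⊆ f '' (F ×ˢ univ) \ f '' (G ×ˢ univ) := by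
  rintro _ ⟨b, -, rfl⟩
  refine ⟨⟨(a, b), ⟨haF, trivial⟩, rfl⟩, ?_⟩
  rintro ⟨⟨a', b'⟩, ⟨ha', -⟩, he⟩
  obtain ⟨rfl, -⟩ := Prod.mk.inj (hf he)
  exact haG ha'

lemma not_countable_image_prod_univ_diff [Uncountable β] (hf : Injective f) {F G : Set α}
    {a : α} (haF : a ∈ F) (haG : a ∉ G) :
    ¬ (f '' (F ×ˢ univ) \ f '' (G ×ˢ univ)).Countable := fun hc ↦
  not_countable_univ <| countable_of_injective_of_countable_image
    (hf.comp (Prod.mk_right_injective a)).injOn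
    (hc.mono (image_mk_univ_subset_image_prod_univ_diff hf haF haG))

end

theorem stmt_14 {α : Type*} [Uncountable α] (f : α × α → α) (hf : Function.Injective f)
    (F G : Set α) (hFG : F ≠ G) :
    ¬ ((f '' (F ×ˢ Set.univ) \ f '' (G ×ˢ Set.univ)).Countable ∧
       (f '' (G ×ˢ Set.univ) \ f '' (F ×ˢ Set.univ)).Countable) := by
  rintro ⟨hFG_countable, hGF_countable⟩
  obtain ⟨a, ⟨haF, haG⟩ | ⟨haG, haF⟩⟩ := Set.symmDiff_nonempty.mpr hFG
  · exact not_countable_image_prod_univ_diff hf haF haG hFG_countable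
  · exact not_countable_image_prod_univ_diff hf haG haF hGF_countable
end

section
/- Generalized nuisance result: let I be an ideal of sets on α (a collection closed under subsets and finite unions, containing ∅) such that Set.univ ∉ I, and suppose there is an injective f : α × α → α with the property that for every nonempty F, the set f '' ({a} ×ˢ univ) ∉ I for each a. Then there is no ν : Set α → α with ν F = ν G ↔ (F \ G ∈ I ∧ G \ F ∈ I). -/
/-!
Embed `Set α` into `Set α` by `X ↦ f '' (X ×ˢ univ)`. Since `f` is injective, the difference of
the images of `X` and `Y` contains a whole fibre `range (f (x, ·))` for each `x ∈ X \ Y`, and no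
fibre lies in `I`; so two images agree modulo `I` only if `X = Y`. Composing with `ν` would then
inject `Set α` into `α`, which Cantor's theorem forbids.
-/

open Set

theorem range_prodMk_subset_image_prod_univ_diff {α β γ : Type*} {f : α × β → γ}
    (hf : Function.Injective f) {X Y : Set α} {x : α} (hxX : x ∈ X) (hxY : x ∉ Y) :
    range (fun y => f (x, y)) ⊆ f '' (X ×ˢ univ) \ f '' (Y ×ˢ univ) := by
  rw [← image_sdiff hf]
  rintro _ ⟨y, rfl⟩
  exact mem_image_of_mem f ⟨⟨hxX, mem_univ y⟩, fun hxy => hxY hxy.1⟩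

theorem subset_of_image_prod_univ_diff_mem {α β γ : Type*} {I : Set (Set γ)}
    (hsub : ∀ A B : Set γ, A ⊆ B → B ∈ I → A ∈ I) {f : α × β → γ}
    (hf : Function.Injective f) (hrange : ∀ a : α, range (fun y => f (a, y)) ∉ I)
    {X Y : Set α} (h : f '' (X ×ˢ univ) \ f '' (Y ×ˢ univ) ∈ I) : X ⊆ Y := fun x hxX => by
  by_contra hxY
  exact hrange x (hsub _ _ (range_prodMk_subset_image_prod_univ_diff hf hxX hxY) h)

theorem stmt_15_general {α : Type*} (I : Set (Set α))
    (hsub : ∀ A B : Set α, A ⊆ B → B ∈ I → A ∈ I)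
    (f : α × α → α) (hf : Function.Injective f)
    (hrange : ∀ a : α, Set.range (fun y => f (a, y)) ∉ I) :
    ¬ ∃ ν : Set α → α, ∀ F G : Set α, ν F = ν G ↔ (F \ G ∈ I ∧ G \ F ∈ I) := by
  rintro ⟨ν, hν⟩
  have hinj : Function.Injective fun X : Set α => ν (f '' (X ×ˢ univ)) := fun X Y h => by
    obtain ⟨hXY, hYX⟩ := (hν _ _).mp h
    exact (subset_of_image_prod_univ_diff_mem hsub hf hrange hXY).antisymm
      (subset_of_image_prod_univ_diff_mem hsub hf hrange hYX)
  exact Function.cantor_injective _ hinj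

theorem stmt_15 {α : Type*} (I : Set (Set α))
    (hsub : ∀ A B : Set α, A ⊆ B → B ∈ I → A ∈ I)
    (hunion : ∀ A B : Set α, A ∈ I → B ∈ I → A ∪ B ∈ I)
    (hempty : (∅ : Set α) ∈ I)
    (huniv : (Set.univ : Set α) ∉ I)
    (f : α × α → α) (hf : Function.Injective f)
    (hrange : ∀ a : α, Set.range (fun y => f (a, y)) ∉ I) :
    ¬ ∃ ν : Set α → α, ∀ F G : Set α, ν F = ν G ↔ (F \ G ∈ I ∧ G \ F ∈ I) :=
  stmt_15_general I hsub f hf hrange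
end
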